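/- For a > 0 and b ∈ ℝ with a² + b² = 1/4, the function φ_{a,b}(q) = (2a/π)^{1/4} e^{-(a+ib)q²} satisfies |φ_{a,b}(p)| = |φ̂_{a,b}(p)| for all p ∈ ℝ. -/

import Mathlib

/-- The Gaussian `φ_{a,b}(q) = (2a/π)^{1/4} e^{-(a+ib)q²}`. -/
noncomputable def phiG (a b : ℝ) (q : ℝ) : ℂ :=
  (((2 * a / Real.pi) ^ ((1 : ℝ) / 4) : ℝ) : ℂ) * Complex.exp (-(a + b * Complex.I) * (q : ℂ) ^ 2)

/-- The Fourier transform with convention `φ̂(p) = (2π)^{-1/2} ∫ e^{-ipq} φ(q) dq`. -/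
noncomputable def fourierT (φ : ℝ → ℂ) (p : ℝ) : ℂ :=
  ((((2 * Real.pi) ^ (-(1 : ℝ) / 2) : ℝ)) : ℂ) *
    ∫ q : ℝ, Complex.exp (-(p * q) * Complex.I) * φ q

/-
`φ_{a,b}` is a Gaussian of complex width `c = a + ib` with `Re c > 0`, so the Gaussian Fourier
integral gives `φ̂_{a,b}(p) = (2a/π)^{1/4} (2c)^{-1/2} e^{-p²/(4c)}`. In modulus this is
`(2a/π)^{1/4} (2|c|)^{-1/2} e^{-a p²/(4|c|²)}`, while `|φ_{a,b}(p)| = (2a/π)^{1/4} e^{-a p²}`;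
the two agree exactly when `|c| = 1/2`.
-/

open Complex

lemma norm_phiG {a : ℝ} (ha : 0 ≤ a) (b q : ℝ) :
    ‖phiG a b q‖ = (2 * a / Real.pi) ^ ((1 : ℝ) / 4) * Real.exp (-a * q ^ 2) := by
  rw [phiG, norm_mul, norm_real, Real.norm_of_nonneg (by positivity), norm_exp]
  congr 1
  simp [← ofReal_pow]

lemma fourierT_phiG {a : ℝ} (ha : 0 < a) (b p : ℝ) :
    fourierT (phiG a b) p =
      (((2 * Real.pi) ^ (-(1 : ℝ) / 2) * (2 * a / Real.pi) ^ ((1 : ℝ) / 4) : ℝ) : ℂ) *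
        ((Real.pi / (a + b * I)) ^ (1 / 2 : ℂ) * cexp (-(p : ℂ) ^ 2 / (4 * (a + b * I)))) := by
  have hre : 0 < ((a : ℂ) + b * I).re := by simpa using ha
  rw [fourierT, ofReal_mul, mul_assoc, ← neg_sq (p : ℂ), ← fourierIntegral_gaussian hre]
  congr 1
  rw [← MeasureTheory.integral_const_mul]
  congr 1 with q
  rw [phiG]
  ring_nf

lemma re_neg_sq_div_four_mul (a b p : ℝ) :
    (-(p : ℂ) ^ 2 / (4 * (a + b * I))).re = -(a * p ^ 2) / (4 * (a ^ 2 + b ^ 2)) := by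
  simp only [← ofReal_pow, div_re, neg_re, ofReal_re, mul_re, re_ofNat, add_re, I_re, mul_zero,
    ofReal_im, I_im, mul_one, sub_self, add_zero, im_ofNat, add_im, mul_im, zero_add, zero_mul,
    sub_zero, neg_mul, normSq_apply, neg_im, neg_zero, zero_div]
  rw [show -(p ^ 2 * (4 * a)) = 4 * -(a * p ^ 2) by ring,
    show 4 * a * (4 * a) + 4 * b * (4 * b) = 4 * (4 * (a ^ 2 + b ^ 2)) by ring,
    mul_div_mul_left _ _ four_ne_zero]

lemma norm_cpow_half_ofReal_div {x : ℝ} (hx : 0 ≤ x) (c : ℂ) :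
    ‖((x : ℂ) / c) ^ (1 / 2 : ℂ)‖ = (x / ‖c‖) ^ (1 / 2 : ℝ) := by
  rw [show (1 / 2 : ℂ) = ((1 / 2 : ℝ) : ℂ) by norm_num, norm_cpow_real, norm_div, norm_real,
    Real.norm_of_nonneg hx]

lemma rpow_neg_half_two_mul_mul_rpow_half_div {x r : ℝ} (hx : 0 < x) (hr : 0 < r) :
    (2 * x) ^ (-(1 : ℝ) / 2) * (x / r) ^ (1 / 2 : ℝ) = (2 * r) ^ (-(1 : ℝ) / 2) := by
  rw [show x / r = 2 * x / (2 * r) by field_simp, Real.div_rpow (by positivity) (by positivity),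
    neg_div, Real.rpow_neg (by positivity), Real.rpow_neg (by positivity)]
  field_simp

lemma norm_fourierT_phiG {a : ℝ} (ha : 0 < a) (b p : ℝ) :
    ‖fourierT (phiG a b) p‖ = (2 * a / Real.pi) ^ ((1 : ℝ) / 4) *
      (2 * ‖(a + b * I : ℂ)‖) ^ (-(1 : ℝ) / 2) *
        Real.exp (-(a * p ^ 2) / (4 * (a ^ 2 + b ^ 2))) := by
  have hc : 0 < ‖(a + b * I : ℂ)‖ := ha.trans_le (by simpa using re_le_norm (a + b * I : ℂ))
  rw [fourierT_phiG ha, norm_mul, norm_mul, norm_real, Real.norm_of_nonneg (by positivity),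
    norm_cpow_half_ofReal_div Real.pi_pos.le, norm_exp, re_neg_sq_div_four_mul,
    ← rpow_neg_half_two_mul_mul_rpow_half_div Real.pi_pos hc]
  ring

theorem stmt10 (a b : ℝ) (ha : 0 < a) (hab : a ^ 2 + b ^ 2 = 1 / 4) (p : ℝ) :
    ‖phiG a b p‖ = ‖fourierT (phiG a b) p‖ := by
  have hc : ‖(a + b * I : ℂ)‖ = 1 / 2 := by
    rw [norm_def, normSq_add_mul_I, hab, show (1 / 4 : ℝ) = (1 / 2) ^ 2 by norm_num,
      Real.sqrt_sq (by norm_num)]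
  rw [norm_phiG ha.le, norm_fourierT_phiG ha, hc, hab]
  norm_num
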